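/- Under the stated assumptions on V, for every j ∈ ℤ and every r = 1, …, p, V_{r,j} = ṽ_{j+r} + h Σ_{ℓ=1}^{r} σ_{j+ℓ−1} Ψ̂^{(r+1−ℓ)}_{j+ℓ}. -/

import Mathlib

/-!
Discrete holomorphicity on the face with lower-left corner `(s - 1, k - 1)` says exactly that
`h σ_{k-1} Ψ̂^{(s)}_k = V_{s,k-1} - V_{s-1,k}`, i.e. that `h σ Ψ̂` is the increment of `V` along
an antidiagonal `s + k = const`. The sum in the identity therefore telescopes along the
antidiagonal from `(r, j)` to `(0, j + r)`.
-/

/-- The discrete complex stretching grid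
`Z_{j,k} = (j+k)h + i(h/ω) Σ_{ℓ=0}^{k-1} σ_ℓ` (the sum being 0 for `k ≤ 0`). -/
noncomputable def Zmap (h ω : ℝ) (σ : ℤ → ℝ) (j k : ℤ) : ℂ :=
  ((j + k : ℤ) : ℂ) * (h : ℂ) +
    Complex.I * ((h : ℂ) / (ω : ℂ)) * ∑ l ∈ Finset.range k.toNat, ((σ l : ℝ) : ℂ)

/-- Discrete holomorphicity with respect to the grid `Zmap h ω σ`: the discrete
Cauchy–Riemann equations hold on every face. -/
def DiscreteHolo (h ω : ℝ) (σ : ℤ → ℝ) (F : ℤ → ℤ → ℂ) : Prop :=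
  ∀ j k : ℤ,
    (F (j + 1) (k + 1) - F j k) * (Zmap h ω σ j (k + 1) - Zmap h ω σ (j + 1) k) =
    (F j (k + 1) - F (j + 1) k) * (Zmap h ω σ (j + 1) (k + 1) - Zmap h ω σ j k)

/-- The auxiliary variable `Φ̂^{(r)}_j = (V_{−r+1,j+1} − V_{−r,j}) / (iω(2h + iσ_j h/ω))`. -/
noncomputable def PhiAux (h ω : ℝ) (σ : ℤ → ℝ) (V : ℤ → ℤ → ℂ) (r j : ℤ) : ℂ :=
  (V (-r + 1) (j + 1) - V (-r) j) /
    (Complex.I * (ω : ℂ) * (2 * (h : ℂ) + Complex.I * (σ j : ℂ) * (h : ℂ) / (ω : ℂ)))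

/-- The auxiliary variable `Ψ̂^{(r)}_j = (V_{r,j} − V_{r−1,j−1}) / (iω(2h + iσ_{j−1} h/ω))`. -/
noncomputable def PsiAux (h ω : ℝ) (σ : ℤ → ℝ) (V : ℤ → ℤ → ℂ) (r j : ℤ) : ℂ :=
  (V r j - V (r - 1) (j - 1)) /
    (Complex.I * (ω : ℂ) * (2 * (h : ℂ) + Complex.I * (σ (j - 1) : ℂ) * (h : ℂ) / (ω : ℂ)))

open Finset

theorem Int.sum_Icc_add_one_sub' {M : Type*} [AddCommGroup M] (g : ℤ → M) {a b : ℤ}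
    (hab : a ≤ b) : ∑ l ∈ Icc (a + 1) b, (g (l - 1) - g l) = g a - g b := by
  induction b, hab using Int.leInduction with
  | base => simp
  | succ b hab ih =>
    rw [← insert_Icc_right_eq_Icc_add_one (by omega), sum_insert (by simp), ih,
      add_sub_cancel_right]
    abel

theorem Finset.sum_range_toNat_add_one {M : Type*} [AddCommMonoid M] {f : ℤ → M}
    (hf : ∀ k < 0, f k = 0) (k : ℤ) :
    ∑ l ∈ range (k + 1).toNat, f l = ∑ l ∈ range k.toNat, f l + f k := by
  rcases le_or_gt 0 k with hk | hk
  · rw [show (k + 1).toNat = k.toNat + 1 by omega, sum_range_succ, Int.toNat_of_nonneg hk]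
  · rw [Int.toNat_of_nonpos (by omega), Int.toNat_of_nonpos hk.le, hf k hk, add_zero]

section Grid

variable {h ω : ℝ} {σ : ℤ → ℝ}

theorem Zmap_antidiag_sub (hσneg : ∀ j : ℤ, j < 0 → σ j = 0) (j k : ℤ) :
    Zmap h ω σ j (k + 1) - Zmap h ω σ (j + 1) k = Complex.I * σ k * h / ω := by
  simp only [Zmap, sum_range_toNat_add_one (f := fun l ↦ (σ l : ℂ)) (by simp_all)]
  push_cast
  ring

theorem Zmap_diag_sub (hσneg : ∀ j : ℤ, j < 0 → σ j = 0) (j k : ℤ) :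
    Zmap h ω σ (j + 1) (k + 1) - Zmap h ω σ j k = 2 * h + Complex.I * σ k * h / ω := by
  simp only [Zmap, sum_range_toNat_add_one (f := fun l ↦ (σ l : ℂ)) (by simp_all)]
  push_cast
  ring

theorem DiscreteHolo.mul_PsiAux {V : ℤ → ℤ → ℂ} (hV : DiscreteHolo h ω σ V) (hh : h ≠ 0)
    (hω : ω ≠ 0) (hσneg : ∀ j : ℤ, j < 0 → σ j = 0) (s k : ℤ) :
    h * σ (k - 1) * PsiAux h ω σ V s k = V s (k - 1) - V (s - 1) k := by
  have hface := hV (s - 1) (k - 1)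
  rw [Zmap_antidiag_sub hσneg, Zmap_diag_sub hσneg] at hface
  simp only [sub_add_cancel] at hface
  have hωc : (ω : ℂ) ≠ 0 := by exact_mod_cast hω
  have hD : 2 * (h : ℂ) + Complex.I * σ (k - 1) * h / ω ≠ 0 := fun hD ↦
    hh (by simpa using congrArg Complex.re hD)
  have hden : Complex.I * ω * (2 * h + Complex.I * σ (k - 1) * h / ω) =
      Complex.I * h * (2 * ω + Complex.I * σ (k - 1)) := by
    field_simp
  rw [PsiAux, ← mul_div_assoc, div_eq_iff (mul_ne_zero (mul_ne_zero Complex.I_ne_zero hωc)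
    hD), hden]
  field_simp at hface
  linear_combination (-Complex.I) * hface +
    h * σ (k - 1) * (V s k - V (s - 1) (k - 1)) * Complex.I_sq

theorem DiscreteHolo.eq_add_sum_mul_PsiAux {V : ℤ → ℤ → ℂ} (hV : DiscreteHolo h ω σ V)
    (hh : h ≠ 0) (hω : ω ≠ 0) (hσneg : ∀ j : ℤ, j < 0 → σ j = 0) {r : ℤ} (hr : 0 ≤ r) (j : ℤ) :
    V r j = V 0 (j + r) +
      h * ∑ l ∈ Icc (1 : ℤ) r, σ (j + l - 1) * PsiAux h ω σ V (r + 1 - l) (j + l) := by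
  have hstep (l : ℤ) : h * (σ (j + l - 1) * PsiAux h ω σ V (r + 1 - l) (j + l)) =
      V (r - (l - 1)) (j + (l - 1)) - V (r - l) (j + l) := by
    rw [← mul_assoc, hV.mul_PsiAux hh hω hσneg]
    ring_nf
  have htele := Int.sum_Icc_add_one_sub' (fun l ↦ V (r - l) (j + l)) hr
  simp only [zero_add, sub_zero, add_zero, sub_self] at htele
  rw [mul_sum, sum_congr rfl fun l _ ↦ hstep l, htele]
  ring

end Grid

theorem stmt12_general
    (h : ℝ) (hh : 0 < h)
    (ω : ℝ) (hω : ω ≠ 0)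
    (σ : ℤ → ℝ) (hσneg : ∀ j : ℤ, j < 0 → σ j = 0)
    (V : ℤ → ℤ → ℂ) (hholo : DiscreteHolo h ω σ V)
    (j : ℤ) (r : ℤ) (hr1 : 1 ≤ r) :
    V r j = V 0 (j + r) +
      (h : ℂ) * ∑ l ∈ Finset.Icc (1 : ℤ) r,
        (σ (j + l - 1) : ℂ) * PsiAux h ω σ V (r + 1 - l) (j + l) :=
  hholo.eq_add_sum_mul_PsiAux hh.ne' hω hσneg (by omega) j

/-- identity `V_{r,j} = ṽ_{j+r} + h Σ_{ℓ=1}^{r} σ_{j+ℓ−1} Ψ̂^{(r+1−ℓ)}_{j+ℓ}`,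
where `ṽ_j = V_{0,j}`. -/
theorem stmt12
    (p : ℕ) (hp : 1 ≤ p) (h : ℝ) (hh : 0 < h)
    (a : ℤ → ℝ) (hsym : ∀ r : ℤ, a (-r) = a r)
    (ω : ℝ) (hω : ω ≠ 0)
    (σ : ℤ → ℝ) (hσ : ∀ j : ℤ, 0 ≤ σ j) (hσneg : ∀ j : ℤ, j < 0 → σ j = 0)
    (V : ℤ → ℤ → ℂ) (hholo : DiscreteHolo h ω σ V)
    (heq : ∀ j k : ℤ, (∑ r ∈ Finset.Icc (-(p : ℤ)) (p : ℤ), (a r : ℂ) * V (j + r) k) +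
        (ω : ℂ) ^ 2 * V j k = 0)
    (j : ℤ) (r : ℤ) (hr1 : 1 ≤ r) (hrp : r ≤ (p : ℤ)) :
    V r j = V 0 (j + r) +
      (h : ℂ) * ∑ l ∈ Finset.Icc (1 : ℤ) r,
        (σ (j + l - 1) : ℂ) * PsiAux h ω σ V (r + 1 - l) (j + l) :=
  stmt12_general h hh ω hω σ hσneg V hholo j r hr1
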